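/- arXiv:2401.07317 — 2 statements merged into one kernel-verified Lean document; each statement's English description precedes it below -/
import Mathlib

section
/- For every x ∈ ℝⁿ and every nonempty subset I of [n]: (1) for each i ∈ I, the value x_i ⊞ (⊞_{j∈I∖{i}} x_j) belongs to the two-element set {0, ⊞_{j∈I} x_j}; and (2) ⊞_{i∈I} x_i = ⊞_{i∈I} [ x_i ⊞ (⊞_{j∈I∖{i}} x_j) ]. -/
open Filter Finset

/-- The binary idempotent operation `⊞`. -/
noncomputable def bop (a b : ℝ) : ℝ :=
  if |b| < |a| then a else if |a| < |b| then b else (a + b) / 2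

/-- The unique real `(2p+1)`-th root of `t`. -/
noncomputable def oddRoot (p : ℕ) (t : ℝ) : ℝ :=
  Real.sign t * |t| ^ ((1 : ℝ) / (2 * (p : ℝ) + 1))

/-- `ξ_I[u](α) = Card{i ∈ I : u i = α} − Card{i ∈ I : u i = −α}`. -/
noncomputable def xiMap {ι : Type*} (I : Finset ι) (u : ι → ℝ) (α : ℝ) : ℤ :=
  ((I.filter fun i => u i = α).card : ℤ) - ((I.filter fun i => u i = -α).card : ℤ)

/-- The residual index set `J_I(u)`. -/
noncomputable def resid {ι : Type*} (I : Finset ι) (u : ι → ℝ) : Finset ι :=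
  I.filter fun i => xiMap I u (u i) ≠ 0

/-- The `n`-ary extension `⊞_{i ∈ I} u i` of the binary operation `⊞`. -/
noncomputable def Fop {ι : Type*} (I : Finset ι) (u : ι → ℝ) : ℝ :=
  if h : (resid I u).Nonempty then
    if 0 < xiMap I u ((resid I u).sup' h fun i => |u i|) then (resid I u).sup' h u
    else if xiMap I u ((resid I u).sup' h fun i => |u i|) < 0 then (resid I u).inf' h u
    else 0
  else 0

/-- The Chebyshev norm `max_{i ∈ [n]} |x i|`. -/
noncomputable def chebNorm {n : ℕ} (x : Fin n → ℝ) : ℝ := ⨆ i, |x i|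

/-- The ultrametric distance `d_⊞(x,y) = max_i |x_i ⊟ y_i|`. -/
noncomputable def dB {n : ℕ} (x y : Fin n → ℝ) : ℝ := ⨆ i, |bop (x i) (-(y i))|

/-!
If the residual set `J` is empty, then `⊞_I x = 0`, and removing `x_i` leaves `-x_i` as the only
unbalanced value, so `⊞_{I∖i} x = -x_i` and every `x_i ⊞ (⊞_{I∖i} x)` vanishes. Otherwise, up to
replacing `x` by `-x`, the value `M = max_J |x_j| > 0` satisfies `ξ(M) > 0` and `⊞_I x = M`. Removing
an index `i` with `|x_i| ≤ M`, `x_i ≠ -M` keeps `M` dominant (or, when `x_i` was the only surplus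
copy of `M`, leaves only smaller residual values), so `x_i ⊞ (⊞_{I∖i} x) = M`; if instead
`x_i = -M` or `|x_i| > M`, then `⊞_{I∖i} x = -x_i` and `x_i ⊞ (⊞_{I∖i} x) = 0`. The new tuple thus
takes the values `0` and `M`, the latter at least once, and its `⊞` is again `M`.
-/

open Finset

section XiMap

variable {ι : Type*} {I : Finset ι} {u : ι → ℝ}

lemma xiMap_apply_neg (I : Finset ι) (u : ι → ℝ) (α : ℝ) :
    xiMap I u (-α) = -xiMap I u α := by
  simp only [xiMap, neg_neg]
  ring

lemma xiMap_apply_zero (I : Finset ι) (u : ι → ℝ) : xiMap I u 0 = 0 := by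
  simp [xiMap]

lemma xiMap_neg (I : Finset ι) (u : ι → ℝ) (α : ℝ) : xiMap I (-u) α = -xiMap I u α := by
  simp only [xiMap, Pi.neg_apply, neg_eq_iff_eq_neg, neg_neg]
  ring

lemma exists_eq_of_xiMap_pos {α : ℝ} (h : 0 < xiMap I u α) : ∃ j ∈ I, u j = α := by
  obtain ⟨j, hj⟩ : (I.filter fun i => u i = α).Nonempty := by
    rw [← card_pos]
    unfold xiMap at h
    omega
  exact ⟨j, mem_filter.1 hj⟩

lemma mem_resid {j : ι} : j ∈ resid I u ↔ j ∈ I ∧ xiMap I u (u j) ≠ 0 := mem_filter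

lemma resid_neg (I : Finset ι) (u : ι → ℝ) : resid I (-u) = resid I u :=
  filter_congr fun j _ => by simp [xiMap_neg, xiMap_apply_neg]

lemma resid_eq_empty_of_forall_abs_le_zero (h : ∀ j ∈ resid I u, |u j| ≤ 0) :
    resid I u = ∅ :=
  eq_empty_of_forall_notMem fun j hj => by
    have hj0 : u j = 0 := abs_nonpos_iff.1 (h j hj)
    exact (mem_resid.1 hj).2 (by rw [hj0, xiMap_apply_zero])

variable [DecidableEq ι] {i : ι}

lemma xiMap_erase (hi : i ∈ I) (α : ℝ) :
    xiMap (I.erase i) u α =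
      xiMap I u α - (if u i = α then 1 else 0) + (if u i = -α then 1 else 0) := by
  have hcard (p : ι → Prop) [DecidablePred p] :
      (((I.erase i).filter p).card : ℤ) = ((I.filter p).card : ℤ) - (if p i then 1 else 0) := by
    rw [filter_erase]
    by_cases h : p i
    · have hmem : i ∈ I.filter p := mem_filter.2 ⟨hi, h⟩
      have := card_erase_add_one hmem
      rw [if_pos h]
      omega
    · rw [erase_eq_of_notMem fun hmem => h (mem_filter.1 hmem).2, if_neg h, sub_zero]
  simp only [xiMap, hcard]
  ring

lemma xiMap_erase_of_ne {α : ℝ} (hi : i ∈ I) (h₁ : u i ≠ α) (h₂ : u i ≠ -α) :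
    xiMap (I.erase i) u α = xiMap I u α := by
  simp [xiMap_erase hi, h₁, h₂]

/-- Removing `u i` changes `ξ` only at `±u i`. -/
lemma abs_le_of_mem_resid_erase {c : ℝ} (hi : i ∈ I) (hbd : ∀ j ∈ resid I u, |u j| ≤ c)
    (hc : |u i| ≤ c) : ∀ j ∈ resid (I.erase i) u, |u j| ≤ c := by
  intro j hj
  obtain ⟨hjI, hξ⟩ := mem_resid.1 hj
  by_cases h₁ : u i = u j
  · rwa [← h₁]
  by_cases h₂ : u i = -u j
  · rwa [← abs_neg, ← h₂]
  rw [xiMap_erase_of_ne hi h₁ h₂] at hξ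
  exact hbd j (mem_resid.2 ⟨mem_of_mem_erase hjI, hξ⟩)

end XiMap

section Fop

variable {ι : Type*} {I : Finset ι} {u : ι → ℝ}

lemma Fop_of_resid_eq_empty (h : resid I u = ∅) : Fop I u = 0 := by
  simp [Fop, h]

lemma Fop_eq_of_xiMap_pos {v : ℝ} (hv : 0 < xiMap I u v)
    (hbd : ∀ j ∈ resid I u, |u j| ≤ |v|) : Fop I u = v := by
  obtain ⟨j, hjI, rfl⟩ := exists_eq_of_xiMap_pos hv
  have hj : j ∈ resid I u := mem_resid.2 ⟨hjI, hv.ne'⟩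
  have hne : (resid I u).Nonempty := ⟨j, hj⟩
  have hmax : (resid I u).sup' hne (fun k => |u k|) = |u j| :=
    le_antisymm (sup'_le _ _ hbd) (le_sup' (fun k => |u k|) hj)
  rw [Fop, dif_pos hne, hmax]
  rcases abs_choice (u j) with habs | habs
  · rw [habs, if_pos hv]
    refine le_antisymm (sup'_le _ _ fun k hk => ?_) (le_sup' u hj)
    exact (le_abs_self _).trans ((hbd k hk).trans_eq habs)
  · rw [habs, xiMap_apply_neg, if_neg (by omega), if_pos (by omega)]
    refine le_antisymm (inf'_le u hj) (le_inf' _ _ fun k hk => ?_)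
    linarith [neg_abs_le (u k), (hbd k hk).trans_eq habs]

lemma abs_Fop_lt {c : ℝ} (hc : 0 < c) (hbd : ∀ j ∈ resid I u, |u j| < c) : |Fop I u| < c := by
  rw [Fop]
  split_ifs with hne
  · obtain ⟨j, hj, hje⟩ := exists_mem_eq_sup' hne u
    exact hje ▸ hbd j hj
  · obtain ⟨j, hj, hje⟩ := exists_mem_eq_inf' hne u
    exact hje ▸ hbd j hj
  all_goals simpa using hc

lemma exists_xiMap_ne_zero_of_resid_nonempty (h : (resid I u).Nonempty) :
    ∃ M, xiMap I u M ≠ 0 ∧ ∀ j ∈ resid I u, |u j| ≤ M := by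
  obtain ⟨j, hj, hje⟩ := exists_mem_eq_sup' h fun k => |u k|
  refine ⟨|u j|, ?_, hje ▸ fun k hk => le_sup' (fun k => |u k|) hk⟩
  rcases abs_choice (u j) with habs | habs
  · rw [habs]
    exact (mem_resid.1 hj).2
  · rw [habs, xiMap_apply_neg, neg_ne_zero]
    exact (mem_resid.1 hj).2

lemma Fop_neg (I : Finset ι) (u : ι → ℝ) : Fop I (-u) = -Fop I u := by
  rcases (resid I u).eq_empty_or_nonempty with h | h
  · rw [Fop_of_resid_eq_empty h, Fop_of_resid_eq_empty (resid_neg I u ▸ h), neg_zero]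
  obtain ⟨M, hM, hbd⟩ := exists_xiMap_ne_zero_of_resid_nonempty h
  have hbd' : ∀ j ∈ resid I u, |u j| ≤ |M| := fun j hj => (hbd j hj).trans (le_abs_self M)
  have hbd_neg : ∀ j ∈ resid I (-u), |(-u) j| ≤ |M| := by
    simpa [resid_neg] using hbd'
  rcases hM.lt_or_gt with hneg | hpos
  · rw [Fop_eq_of_xiMap_pos (u := u) (v := -M) (by rw [xiMap_apply_neg]; omega)
        (by simpa using hbd'),
      Fop_eq_of_xiMap_pos (u := -u) (v := M) (by rw [xiMap_neg]; omega) hbd_neg, neg_neg]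
  · rw [Fop_eq_of_xiMap_pos (u := u) hpos hbd',
      Fop_eq_of_xiMap_pos (u := -u) (v := -M) (by rw [xiMap_apply_neg, xiMap_neg]; omega)
        (by simpa using hbd_neg)]

lemma Fop_eq_of_forall_eq_zero_or_eq (hM : 0 < M) (hval : ∀ i ∈ I, u i = 0 ∨ u i = M)
    (hex : ∃ j ∈ I, u j = M) : Fop I u = M := by
  apply Fop_eq_of_xiMap_pos
  · have hnone : I.filter (fun i => u i = -M) = ∅ :=
      filter_eq_empty_iff.2 fun i hi h => by rcases hval i hi with h' | h' <;> linarith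
    obtain ⟨j, hjI, hj⟩ := hex
    have hsome : 0 < (I.filter fun i => u i = M).card := card_pos.2 ⟨j, mem_filter.2 ⟨hjI, hj⟩⟩
    simp only [xiMap, hnone, card_empty]
    omega
  · intro j hj
    rcases hval j (mem_resid.1 hj).1 with h | h <;> simp [h]

end Fop

lemma bop_self (a : ℝ) : bop a a = a := by
  simp [bop]

lemma bop_neg_cancel (a : ℝ) : bop a (-a) = 0 := by
  simp [bop]

lemma neg_bop_cancel (a : ℝ) : bop (-a) a = 0 := by
  simp [bop]

lemma bop_neg (a b : ℝ) : bop (-a) (-b) = -bop a b := by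
  simp only [bop, abs_neg]
  split_ifs <;> ring

lemma bop_eq_left {a b : ℝ} (h : |b| < |a|) : bop a b = a := if_pos h

lemma bop_eq_right_of_abs_le {a M : ℝ} (hle : |a| ≤ M) (hne : a ≠ -M) : bop a M = M := by
  have hM : |M| = M := abs_of_nonneg ((abs_nonneg a).trans hle)
  rcases hle.lt_or_eq with hlt | heq
  · rw [bop, if_neg (by rw [hM]; exact not_lt.2 hlt.le), if_pos (by rwa [hM])]
  · rcases (abs_eq (heq ▸ abs_nonneg a)).1 heq with rfl | h
    · exact bop_self a
    · exact absurd h hne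

section Erase

variable {ι : Type*} [DecidableEq ι] {I : Finset ι} {u : ι → ℝ} {i : ι} {M : ℝ}

lemma Fop_erase_eq_neg (hi : i ∈ I) (h0 : xiMap I u (u i) = 0)
    (hbd : ∀ j ∈ resid I u, |u j| ≤ |u i|) : Fop (I.erase i) u = -u i := by
  have hbd' := abs_le_of_mem_resid_erase hi hbd le_rfl
  by_cases hz : u i = 0
  · rw [hz, abs_zero] at hbd'
    rw [hz, neg_zero, Fop_of_resid_eq_empty (resid_eq_empty_of_forall_abs_le_zero hbd')]
  · have hne : u i ≠ -u i := fun h => hz (by linarith)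
    apply Fop_eq_of_xiMap_pos
    · rw [xiMap_erase hi, xiMap_apply_neg, h0, if_neg hne, if_pos (neg_neg _).symm]
      norm_num
    · simpa using hbd'

lemma bop_Fop_erase_of_lt_abs (hi : i ∈ I) (hbd : ∀ j ∈ resid I u, |u j| ≤ M)
    (hlt : M < |u i|) : bop (u i) (Fop (I.erase i) u) = 0 := by
  have h0 : xiMap I u (u i) = 0 := by
    by_contra hne
    exact (hbd i (mem_resid.2 ⟨hi, hne⟩)).not_gt hlt
  rw [Fop_erase_eq_neg hi h0 fun j hj => (hbd j hj).trans hlt.le, bop_neg_cancel]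

lemma bop_Fop_erase_of_eq_neg (hi : i ∈ I) (hpos : 0 < xiMap I u M)
    (hbd : ∀ j ∈ resid I u, |u j| ≤ M) (hui : u i = -M) :
    bop (u i) (Fop (I.erase i) u) = 0 := by
  have hM : 0 < xiMap (I.erase i) u M := by
    rw [xiMap_erase hi]
    split_ifs <;> omega
  have hbd' : ∀ j ∈ resid I u, |u j| ≤ |M| := fun j hj => (hbd j hj).trans (le_abs_self M)
  rw [Fop_eq_of_xiMap_pos hM (abs_le_of_mem_resid_erase hi hbd' (by rw [hui, abs_neg])), hui,
    neg_bop_cancel]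

/-- When `u i = M` is the only unbalanced copy of `M`, removing it leaves neither `M` nor `-M`
unbalanced. -/
lemma abs_Fop_erase_lt (hi : i ∈ I) (hbd : ∀ j ∈ resid I u, |u j| ≤ M) (hui : u i = M)
    (hne : u i ≠ -M) (hone : xiMap I u M = 1) : |Fop (I.erase i) u| < M := by
  have hM : 0 < M := by
    have hle : |u i| ≤ M := hbd i (mem_resid.2 ⟨hi, by rw [hui, hone]; exact one_ne_zero⟩)
    rw [hui] at hle hne
    exact lt_of_le_of_ne ((abs_nonneg M).trans hle) (fun h => hne (by rw [← h, neg_zero]))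
  refine abs_Fop_lt hM fun j hj => ?_
  obtain ⟨hjI, hξ⟩ := mem_resid.1 hj
  have hj₁ : u j ≠ M := by
    rintro hj₁
    rw [hj₁, xiMap_erase hi, if_pos hui, if_neg hne, hone] at hξ
    exact hξ rfl
  have hj₂ : u j ≠ -M := by
    rintro hj₂
    rw [hj₂, xiMap_erase hi, xiMap_apply_neg, hone, if_neg hne, if_pos (by rw [neg_neg, hui])] at hξ
    exact hξ rfl
  rw [xiMap_erase_of_ne hi (hui ▸ Ne.symm hj₁) (by rw [hui]; intro h; exact hj₂ (by linarith))]
    at hξ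
  refine lt_of_le_of_ne (hbd j (mem_resid.2 ⟨mem_of_mem_erase hjI, hξ⟩)) fun h => ?_
  rcases (abs_eq hM.le).1 h with h | h
  exacts [hj₁ h, hj₂ h]

lemma bop_Fop_erase_of_abs_le (hi : i ∈ I) (hpos : 0 < xiMap I u M)
    (hbd : ∀ j ∈ resid I u, |u j| ≤ M) (hle : |u i| ≤ M) (hne : u i ≠ -M) :
    bop (u i) (Fop (I.erase i) u) = M := by
  by_cases hM : 0 < xiMap (I.erase i) u M
  · have hbd' : ∀ j ∈ resid I u, |u j| ≤ |M| := fun j hj => (hbd j hj).trans (le_abs_self M)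
    rw [Fop_eq_of_xiMap_pos hM (abs_le_of_mem_resid_erase hi hbd' (hle.trans (le_abs_self M))),
      bop_eq_right_of_abs_le hle hne]
  · have hui : u i = M := by
      by_contra h
      rw [xiMap_erase hi, if_neg h] at hM
      split_ifs at hM <;> omega
    have hone : xiMap I u M = 1 := by
      rw [xiMap_erase hi, if_pos hui, if_neg hne] at hM
      omega
    have hlt : |Fop (I.erase i) u| < |u i| :=
      (abs_Fop_erase_lt hi hbd hui hne hone).trans_le (hui ▸ le_abs_self (u i))
    rw [bop_eq_left hlt, hui]

end Erase

section Decomposition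

variable {ι : Type*} [DecidableEq ι] {I : Finset ι} {u : ι → ℝ} {M : ℝ}

lemma Fop_decomposition_of_resid_eq_empty (h : resid I u = ∅) :
    (∀ i ∈ I, bop (u i) (Fop (I.erase i) u) ∈ ({0, Fop I u} : Set ℝ)) ∧
      Fop I u = Fop I (fun i => bop (u i) (Fop (I.erase i) u)) := by
  have hzero : ∀ i ∈ I, bop (u i) (Fop (I.erase i) u) = 0 := fun i hi => by
    have h0 : xiMap I u (u i) = 0 := by
      by_contra hne
      simpa [h] using mem_resid.2 ⟨hi, hne⟩
    rw [Fop_erase_eq_neg hi h0 (by simp [h]), bop_neg_cancel]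
  refine ⟨fun i hi => by simp [hzero i hi], ?_⟩
  rw [Fop_of_resid_eq_empty h, Fop_of_resid_eq_empty (resid_eq_empty_of_forall_abs_le_zero
    fun j hj => by rw [hzero j (mem_resid.1 hj).1, abs_zero])]

lemma Fop_decomposition_of_xiMap_pos (hpos : 0 < xiMap I u M)
    (hbd : ∀ j ∈ resid I u, |u j| ≤ M) :
    (∀ i ∈ I, bop (u i) (Fop (I.erase i) u) ∈ ({0, Fop I u} : Set ℝ)) ∧
      Fop I u = Fop I (fun i => bop (u i) (Fop (I.erase i) u)) := by
  obtain ⟨j, hjI, hj⟩ := exists_eq_of_xiMap_pos hpos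
  have hM : 0 < M := by
    have hle : |M| ≤ M := hj ▸ hbd j (mem_resid.2 ⟨hjI, hj ▸ hpos.ne'⟩)
    refine lt_of_le_of_ne ((abs_nonneg M).trans hle) fun h => ?_
    rw [← h, xiMap_apply_zero] at hpos
    exact hpos.false
  have hval : ∀ i ∈ I, bop (u i) (Fop (I.erase i) u) = 0 ∨ bop (u i) (Fop (I.erase i) u) = M := by
    intro i hi
    rcases le_or_gt |u i| M with hle | hlt
    · by_cases hneg : u i = -M
      · exact Or.inl (bop_Fop_erase_of_eq_neg hi hpos hbd hneg)
      · exact Or.inr (bop_Fop_erase_of_abs_le hi hpos hbd hle hneg)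
    · exact Or.inl (bop_Fop_erase_of_lt_abs hi hbd hlt)
  have hbj : bop (u j) (Fop (I.erase j) u) = M :=
    bop_Fop_erase_of_abs_le hjI hpos hbd (by rw [hj, abs_of_pos hM]) (by rw [hj]; linarith)
  have hFop : Fop I u = M := Fop_eq_of_xiMap_pos hpos fun k hk => (hbd k hk).trans (le_abs_self M)
  refine ⟨fun i hi => ?_, ?_⟩
  · rw [hFop]
    exact hval i hi
  · rw [hFop, Fop_eq_of_forall_eq_zero_or_eq hM hval ⟨j, hjI, hbj⟩]

lemma Fop_decomposition_of_neg
    (h : (∀ i ∈ I, bop ((-u) i) (Fop (I.erase i) (-u)) ∈ ({0, Fop I (-u)} : Set ℝ)) ∧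
      Fop I (-u) = Fop I (fun i => bop ((-u) i) (Fop (I.erase i) (-u)))) :
    (∀ i ∈ I, bop (u i) (Fop (I.erase i) u) ∈ ({0, Fop I u} : Set ℝ)) ∧
      Fop I u = Fop I (fun i => bop (u i) (Fop (I.erase i) u)) := by
  have hb : (fun i => bop ((-u) i) (Fop (I.erase i) (-u))) =
      -fun i => bop (u i) (Fop (I.erase i) u) := by
    funext i
    simp only [Pi.neg_apply, Fop_neg, bop_neg]
  rw [hb, Fop_neg, Fop_neg, neg_inj] at h
  refine ⟨fun i hi => ?_, h.2⟩
  have hmem := h.1 i hi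
  simp only [Pi.neg_apply, Fop_neg, bop_neg, Set.mem_insert_iff, Set.mem_singleton_iff,
    neg_eq_zero, neg_inj] at hmem
  exact hmem

end Decomposition

theorem stmt2_general (n : ℕ) (x : Fin n → ℝ) (I : Finset (Fin n)) :
    (∀ i ∈ I, bop (x i) (Fop (I.erase i) x) ∈ ({0, Fop I x} : Set ℝ)) ∧
    Fop I x = Fop I (fun i => bop (x i) (Fop (I.erase i) x)) := by
  rcases (resid I x).eq_empty_or_nonempty with hempty | hne
  · exact Fop_decomposition_of_resid_eq_empty hempty
  obtain ⟨M, hM, hbd⟩ := exists_xiMap_ne_zero_of_resid_nonempty hne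
  rcases hM.lt_or_gt with hneg | hpos
  · refine Fop_decomposition_of_neg (Fop_decomposition_of_xiMap_pos (M := M) ?_ ?_)
    · rw [xiMap_neg]
      omega
    · simpa [resid_neg] using hbd
  · exact Fop_decomposition_of_xiMap_pos hpos hbd

/-- decomposition property of the n-ary operation. -/
theorem stmt2 (n : ℕ) (x : Fin n → ℝ) (I : Finset (Fin n)) (hI : I.Nonempty) :
    (∀ i ∈ I, bop (x i) (Fop (I.erase i) x) ∈ ({0, Fop I x} : Set ℝ)) ∧
    Fop I x = Fop I (fun i => bop (x i) (Fop (I.erase i) x)) :=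
  stmt2_general n x I
end

section
/- Let {x^{(k)}}_{k∈ℕ} be a sequence in ℝⁿ and x ∈ ℝⁿ with d_⊞(x^{(k)}, x) → 0 as k → ∞. Then there exists k₀ ∈ ℕ such that for all k ≥ k₀ and every index i with x_i ≠ 0 one has x_i^{(k)} = x_i; moreover, for every index i with x_i = 0, x_i^{(k)} → 0 as k → ∞. -/
open Filter Finset

lemma abs_le_abs_bop_neg_of_ne {u v : ℝ} (huv : u ≠ v) : |v| ≤ |bop u (-v)| := by
  unfold bop
  rw [abs_neg]
  split_ifs with h₁ h₂
  · exact h₁.le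
  · rw [abs_neg]
  · have hneg : u = -v :=
      (abs_eq_abs.1 (le_antisymm (not_lt.1 h₁) (not_lt.1 h₂))).resolve_left huv
    rw [hneg, show (-v + -v) / 2 = -v by ring, abs_neg]

lemma eq_of_abs_bop_neg_lt {u v : ℝ} (h : |bop u (-v)| < |v|) : u = v := by
  by_contra huv
  exact (abs_le_abs_bop_neg_of_ne huv).not_gt h

@[simp]
lemma bop_zero_right (u : ℝ) : bop u 0 = u := by
  unfold bop
  split_ifs with h₁ h₂
  · rfl
  · exact absurd h₂ (by simp)
  · have hu : u = 0 := abs_eq_zero.1 (le_antisymm (by simpa using h₁) (abs_nonneg u))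
    simp [hu]

lemma abs_bop_neg_le_dB {n : ℕ} (x y : Fin n → ℝ) (i : Fin n) :
    |bop (x i) (-(y i))| ≤ dB x y :=
  le_ciSup (Set.finite_range fun j => |bop (x j) (-(y j))|).bddAbove i

/-- F-convergence implies eventual equality on nonzero coordinates
and ordinary convergence to 0 on zero coordinates. -/
theorem stmt8 (n : ℕ) (x : ℕ → Fin n → ℝ) (a : Fin n → ℝ)
    (h : Filter.Tendsto (fun k => dB (x k) a) Filter.atTop (nhds 0)) :
    (∃ k₀ : ℕ, ∀ k ≥ k₀, ∀ i, a i ≠ 0 → x k i = a i) ∧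
    (∀ i, a i = 0 → Filter.Tendsto (fun k => x k i) Filter.atTop (nhds 0)) := by
  constructor
  · have hcoord : ∀ i, ∀ᶠ k in atTop, a i ≠ 0 → x k i = a i := fun i => by
      by_cases hai : a i = 0
      · exact .of_forall fun _ hne => absurd hai hne
      · filter_upwards [h.eventually_lt_const (abs_pos.2 hai)] with k hk _
        exact eq_of_abs_bop_neg_lt ((abs_bop_neg_le_dB (x k) a i).trans_lt hk)
    exact eventually_atTop.1 (eventually_all.2 hcoord)
  · intro i hai
    refine squeeze_zero_norm (fun k => ?_) h
    simpa [hai] using abs_bop_neg_le_dB (x k) a i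
end
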